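/- arXiv:1710.07755 — 2 statements merged into one kernel-verified Lean document; each statement's English description precedes it below -/
import Mathlib

section
/- Let D > 0, let V : ℝ → ℝ be continuous, and let p : ℝ → ℝ be twice continuously differentiable with compact support. Then for every q ∈ ℝ, lim_{ε→0⁺} (1/ε) · [ (2πDε)^{−1/2} ∫_ℝ exp(−(q−u)²/(2Dε)) · exp(−ε V(u)) · p(u) du − p(q) ] = (D/2) p″(q) − V(q) p(q). In other words, the infinitesimal Bayesian update with Gaussian transition density and exponential likelihood generates the imaginary-time Schrödinger equation −∂p/∂t = (−(D/2) ∂²/∂q² + V) p. -/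
/-!
Substituting `u = q + √(D ε) y` turns the update into the expectation
`E[exp (-ε V (q + √(D ε) Y)) p (q + √(D ε) Y)]` with `Y` standard normal. Since `E Y = 0`, one may
subtract the first-order Taylor polynomial `p q + √(D ε) Y p'(q)` inside the expectation; divided
by `ε`, the remainder tends pointwise to `(D / 2) Y² p''(q) - V(q) p(q)` (second-order Taylor
expansion and `exp s = 1 + s + O(s²)`) and is dominated by `C + K Y²`. Dominated convergence and
`E Y² = 1` give the limit. Only the first two moments of `Y` matter.
-/

open MeasureTheory ProbabilityTheory Real Filter Topology Asymptotics Set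
open scoped NNReal

lemma ContDiff.isLittleO_sub_taylor_two {f : ℝ → ℝ} (hf : ContDiff ℝ 2 f) (x : ℝ) :
    (fun h ↦ f (x + h) - f x - h * deriv f x - h ^ 2 / 2 * deriv (deriv f) x) =o[𝓝 0]
      fun h ↦ h ^ 2 := by
  have hx : Tendsto (x + ·) (𝓝 0) (𝓝 x) := by
    simpa using (continuous_const_add x).tendsto 0
  refine ((taylor_isLittleO_univ hf).comp_tendsto hx).congr (fun h ↦ ?_) (fun h ↦ ?_)
  · simp [taylor_within_apply, iteratedDerivWithin_univ, iteratedDeriv_succ]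
    ring
  · simp

lemma abs_sub_sub_mul_deriv_le_of_lipschitzWith {f : ℝ → ℝ} {K : ℝ≥0} (hf : Differentiable ℝ f)
    (hf' : LipschitzWith K (deriv f)) (x h : ℝ) :
    |f (x + h) - f x - h * deriv f x| ≤ K * h ^ 2 := by
  have hg : ∀ t, HasDerivAt (fun t ↦ f (x + t) - t * deriv f x)
      (deriv f (x + t) - deriv f x) t := fun t ↦
    ((hf (x + t)).hasDerivAt.comp_const_add x t).sub (hasDerivAt_mul_const _)
  have hg' : ∀ t ∈ uIcc 0 h, ‖deriv f (x + t) - deriv f x‖ ≤ K * |h| := fun t ht ↦ by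
    calc ‖deriv f (x + t) - deriv f x‖ ≤ K * dist (x + t) x := hf'.dist_le_mul _ _
      _ = K * |t - 0| := by simp
      _ ≤ K * |h| := by simpa using mul_le_mul_of_nonneg_left (abs_sub_left_of_mem_uIcc ht) K.2
  have := (convex_uIcc 0 h).norm_image_sub_le_of_norm_hasDerivWithin_le
    (fun t _ ↦ (hg t).hasDerivWithinAt) hg' left_mem_uIcc right_mem_uIcc
  simpa [Real.norm_eq_abs, sq, mul_assoc, sub_right_comm] using this

lemma tendsto_exp_mul_sub_one_div {α : Type*} {l : Filter α} {ε w : α → ℝ} {a : ℝ}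
    (hε : Tendsto ε l (𝓝 0)) (hε0 : ∀ᶠ t in l, ε t ≠ 0) (hw : Tendsto w l (𝓝 a)) :
    Tendsto (fun t ↦ (exp (ε t * w t) - 1) / ε t) l (𝓝 a) := by
  have hεw : ∀ᶠ t in l, |ε t * w t| ≤ 1 :=
    Tendsto.eventually_le_const one_pos (by simpa using (hε.mul hw).abs)
  have hrem : Tendsto (fun t ↦ (exp (ε t * w t) - 1 - ε t * w t) / ε t) l (𝓝 0) := by
    refine squeeze_zero_norm' ?_ (by simpa using hε.abs.mul (hw.pow 2))
    filter_upwards [hεw] with t ht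
    calc ‖(exp (ε t * w t) - 1 - ε t * w t) / ε t‖
        ≤ (ε t * w t) ^ 2 / |ε t| := by
          rw [norm_div, Real.norm_eq_abs, Real.norm_eq_abs]
          gcongr
          exact abs_exp_sub_one_sub_id_le ht
      _ = |ε t| * w t ^ 2 := by
          rw [mul_pow, ← sq_abs (ε t)]
          rcases eq_or_ne (ε t) 0 with h | h
          · simp [h]
          · field_simp
  refine (by simpa using hw.add hrem : Tendsto _ l (𝓝 a)).congr' ?_
  filter_upwards [hε0] with t ht
  field_simp
  ring

lemma HasCompactSupport.exists_abs_mul_exp_neg_mul_sub_one_le {p V : ℝ → ℝ}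
    (hsupp : HasCompactSupport p) (hp : Continuous p) (hV : Continuous V) :
    ∃ C, ∀ᶠ ε in 𝓝 0, ∀ x, |p x * (exp (-(ε * V x)) - 1)| ≤ C * |ε| := by
  obtain ⟨P, hP⟩ := hsupp.exists_bound_of_continuous hp
  obtain ⟨K₀, hK₀⟩ := hsupp.isCompact.exists_bound_of_continuousOn hV.continuousOn
  set K := max K₀ 0
  have hK : ∀ x ∈ tsupport p, |V x| ≤ K := fun x hx ↦ (hK₀ x hx).trans (le_max_left _ _)
  have hP0 : 0 ≤ P := (norm_nonneg _).trans (hP 0)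
  refine ⟨P * (2 * K), ?_⟩
  have hsmall : ∀ᶠ ε in 𝓝 (0 : ℝ), |ε| * K ≤ 1 :=
    Tendsto.eventually_le_const one_pos
      (by simpa using (tendsto_id (x := 𝓝 (0 : ℝ))).abs.mul_const K)
  filter_upwards [hsmall] with ε hε x
  by_cases hx : x ∈ tsupport p
  · have hεV : |ε * V x| ≤ |ε| * K := by
      rw [abs_mul]; exact mul_le_mul_of_nonneg_left (hK x hx) (abs_nonneg ε)
    have hexp : |exp (-(ε * V x)) - 1| ≤ 2 * (|ε| * K) := by
      calc |exp (-(ε * V x)) - 1| ≤ 2 * |ε * V x| :=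
            by simpa using abs_exp_sub_one_le (x := -(ε * V x)) (by simpa using hεV.trans hε)
        _ ≤ 2 * (|ε| * K) := by gcongr
    rw [abs_mul]
    calc |p x| * |exp (-(ε * V x)) - 1| ≤ P * (2 * (|ε| * K)) :=
          mul_le_mul (hP x) hexp (abs_nonneg _) hP0
      _ = P * (2 * K) * |ε| := by ring
  · rw [image_eq_zero_of_notMem_tsupport hx, zero_mul, abs_zero]
    have : 0 ≤ K := le_max_right _ _
    positivity

/-- The update of the statement written in the variable `y = (u - q) / √(D ε)`, with the
normalised Gaussian kernel replaced by an arbitrary law `μ` of `y`. -/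
noncomputable def bayesUpdate (μ : Measure ℝ) (D : ℝ) (V p : ℝ → ℝ) (ε q : ℝ) : ℝ :=
  ∫ y, exp (-(ε * V (q + √(D * ε) * y))) * p (q + √(D * ε) * y) ∂μ

section Generator

variable {μ : Measure ℝ} {D : ℝ} {V p : ℝ → ℝ}

lemma integrable_bayesUpdate_integrand [IsFiniteMeasure μ] (hV : Continuous V)
    (hp : Continuous p) (hsupp : HasCompactSupport p) (ε q σ : ℝ) :
    Integrable (fun y ↦ exp (-(ε * V (q + σ * y))) * p (q + σ * y)) μ := by
  have hg : Continuous fun x ↦ exp (-(ε * V x)) * p x := by fun_prop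
  obtain ⟨B, hB⟩ := (hsupp.mul_left (f := fun x ↦ exp (-(ε * V x)))).exists_bound_of_continuous hg
  exact .of_bound (hg.comp (by fun_prop : Continuous fun y ↦ q + σ * y)).aestronglyMeasurable B
    (ae_of_all _ fun y ↦ hB _)

lemma bayesUpdate_sub_eq_integral [IsProbabilityMeasure μ] (hμ : Integrable id μ)
    (hmean : μ[id] = 0) (hV : Continuous V) (hp : Continuous p) (hsupp : HasCompactSupport p)
    (ε q : ℝ) :
    bayesUpdate μ D V p ε q - p q = ∫ y, (exp (-(ε * V (q + √(D * ε) * y))) *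
      p (q + √(D * ε) * y) - p q - √(D * ε) * y * deriv p q) ∂μ := by
  have hlin : Integrable (fun y ↦ √(D * ε) * y * deriv p q) μ :=
    (hμ.const_mul _).mul_const _
  have hg := integrable_bayesUpdate_integrand (μ := μ) hV hp hsupp ε q √(D * ε)
  set g := fun y ↦ exp (-(ε * V (q + √(D * ε) * y))) * p (q + √(D * ε) * y)
  have hg' : Integrable (fun y ↦ g y - p q) μ := hg.sub (integrable_const _)
  rw [integral_sub hg' hlin, integral_sub hg (integrable_const _),
    integral_mul_const, integral_const_mul]
  simp [bayesUpdate, g, show ∫ y, y ∂μ = 0 from hmean]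

lemma tendsto_bayesUpdate_remainder_div (hD : 0 ≤ D) (hV : Continuous V) (hp : ContDiff ℝ 2 p)
    (q y : ℝ) :
    Tendsto (fun ε ↦ (exp (-(ε * V (q + √(D * ε) * y))) * p (q + √(D * ε) * y) - p q
      - √(D * ε) * y * deriv p q) / ε) (𝓝[>] 0)
      (𝓝 (D / 2 * y ^ 2 * deriv (deriv p) q - V q * p q)) := by
  set h : ℝ → ℝ := fun ε ↦ √(D * ε) * y
  have hh : Tendsto h (𝓝[>] 0) (𝓝 0) := by
    have : Continuous h := by fun_prop
    simpa [h] using (this.tendsto 0).mono_left nhdsWithin_le_nhds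
  have hh_sq : ∀ ε, 0 ≤ ε → h ε ^ 2 = D * y ^ 2 * ε := fun ε hε ↦ by
    simp only [h, mul_pow, sq_sqrt (mul_nonneg hD hε)]; ring
  have hx : Tendsto (fun ε ↦ q + h ε) (𝓝[>] 0) (𝓝 q) := by simpa using hh.const_add q
  have hε : Tendsto (fun ε : ℝ ↦ ε) (𝓝[>] 0) (𝓝 0) := nhdsWithin_le_nhds
  -- the second-order Taylor remainder along `h` is `o(h²) = o(ε)`
  have htaylor : Tendsto (fun ε ↦ (p (q + h ε) - p q - h ε * deriv p q
      - h ε ^ 2 / 2 * deriv (deriv p) q) / ε) (𝓝[>] 0) (𝓝 0) := by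
    refine IsLittleO.tendsto_div_nhds_zero ?_
    refine ((hp.isLittleO_sub_taylor_two q).comp_tendsto hh).trans_isBigO ?_
    refine IsBigO.of_bound (D * y ^ 2) ?_
    filter_upwards [self_mem_nhdsWithin] with ε hε
    simp [hh_sq ε (le_of_lt hε), abs_of_nonneg hD, abs_of_pos (mem_Ioi.mp hε), mul_comm,
      mul_left_comm]
  have hlik := tendsto_exp_mul_sub_one_div hε
    (eventually_nhdsWithin_of_forall fun ε hε ↦ ne_of_gt hε) (hV.neg.tendsto q |>.comp hx)
  have hlim : p q * -V q + (0 + D / 2 * y ^ 2 * deriv (deriv p) q)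
      = D / 2 * y ^ 2 * deriv (deriv p) q - V q * p q := by ring
  refine (hlim ▸ (((hp.continuous.tendsto q).comp hx).mul hlik).add
    (htaylor.add_const _)).congr' ?_
  filter_upwards [self_mem_nhdsWithin] with ε hε
  have hε0 : ε ≠ 0 := ne_of_gt hε
  simp only [Function.comp_apply, Pi.neg_apply]
  field_simp
  rw [hh_sq ε (le_of_lt hε)]
  simp only [h]
  ring_nf

lemma exists_bound_bayesUpdate_remainder_div (hD : 0 ≤ D) (hV : Continuous V)
    (hp : ContDiff ℝ 2 p) (hsupp : HasCompactSupport p) (q : ℝ) :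
    ∃ C K : ℝ, ∀ᶠ ε in 𝓝[>] 0, ∀ y, ‖(exp (-(ε * V (q + √(D * ε) * y))) * p (q + √(D * ε) * y)
      - p q - √(D * ε) * y * deriv p q) / ε‖ ≤ C + K * y ^ 2 := by
  obtain ⟨C, hC⟩ := hsupp.exists_abs_mul_exp_neg_mul_sub_one_le hp.continuous hV
  obtain ⟨K, hK⟩ := ContDiff.lipschitzWith_of_hasCompactSupport hsupp.deriv
    (hp.iterate_deriv' 1 1) one_ne_zero
  refine ⟨C, K * D, ?_⟩
  filter_upwards [nhdsWithin_le_nhds hC, self_mem_nhdsWithin] with ε hCε hε y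
  have hε : 0 < ε := hε
  set h := √(D * ε) * y
  have htaylor := abs_sub_sub_mul_deriv_le_of_lipschitzWith (hp.differentiable two_ne_zero) hK q h
  have hh_sq : h ^ 2 = D * y ^ 2 * ε := by
    simp only [h, mul_pow, sq_sqrt (mul_nonneg hD hε.le)]; ring
  calc ‖(exp (-(ε * V (q + h))) * p (q + h) - p q - h * deriv p q) / ε‖
      = |p (q + h) * (exp (-(ε * V (q + h))) - 1) + (p (q + h) - p q - h * deriv p q)| / ε := by
        rw [norm_div, Real.norm_eq_abs, Real.norm_eq_abs, abs_of_pos hε]; ring_nf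
    _ ≤ (C * |ε| + K * h ^ 2) / ε := by
        gcongr; exact (abs_add_le _ _).trans (add_le_add (hCε _) htaylor)
    _ = C + K * D * y ^ 2 := by rw [hh_sq, abs_of_pos hε]; field_simp

theorem tendsto_bayesUpdate_sub_div [IsProbabilityMeasure μ] (hμ : MemLp id 2 μ)
    (hmean : μ[id] = 0) (hvar : Var[id; μ] = 1) (hD : 0 ≤ D) (hV : Continuous V)
    (hp : ContDiff ℝ 2 p) (hsupp : HasCompactSupport p) (q : ℝ) :
    Tendsto (fun ε ↦ (bayesUpdate μ D V p ε q - p q) / ε) (𝓝[>] 0)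
      (𝓝 (D / 2 * deriv (deriv p) q - V q * p q)) := by
  have hsq : ∫ y, y ^ 2 ∂μ = 1 := by
    rw [← hvar, variance_of_integral_eq_zero aemeasurable_id hmean]; rfl
  have hsq_int : Integrable (fun y ↦ y ^ 2) μ := hμ.integrable_sq
  have hlim : ∫ y, (D / 2 * y ^ 2 * deriv (deriv p) q - V q * p q) ∂μ
      = D / 2 * deriv (deriv p) q - V q * p q := by
    rw [integral_sub ((hsq_int.const_mul _).mul_const _) (integrable_const _),
      integral_mul_const, integral_const_mul, hsq]
    simp
  obtain ⟨C, K, hbound⟩ := exists_bound_bayesUpdate_remainder_div hD hV hp hsupp q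
  have hcont := hp.continuous
  rw [← hlim]
  refine (tendsto_integral_filter_of_dominated_convergence (fun y ↦ C + K * y ^ 2)
    (.of_forall fun ε ↦ (by fun_prop : Continuous _).aestronglyMeasurable)
    (hbound.mono fun ε hε ↦ ae_of_all _ hε)
    ((integrable_const C).add (hsq_int.const_mul K))
    (ae_of_all _ (tendsto_bayesUpdate_remainder_div hD hV hp q))).congr' ?_
  filter_upwards with ε
  rw [bayesUpdate_sub_eq_integral (hμ.integrable one_le_two) hmean hV hcont hsupp, integral_div]

end Generator

lemma bayesUpdate_gaussianReal {D ε : ℝ} (hD : 0 < D) (hε : 0 < ε) {V p : ℝ → ℝ}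
    (hV : Measurable V) (hp : Measurable p) (q : ℝ) :
    bayesUpdate (gaussianReal 0 1) D V p ε q = (2 * π * D * ε) ^ (-(1 : ℝ) / 2) *
      ∫ u, exp (-(q - u) ^ 2 / (2 * D * ε)) * exp (-(ε * V u)) * p u := by
  have hDε : 0 < D * ε := mul_pos hD hε
  have hmap : (gaussianReal 0 1).map (fun y ↦ q + √(D * ε) * y)
      = gaussianReal q (D * ε).toNNReal := by
    calc (gaussianReal 0 1).map (fun y ↦ q + √(D * ε) * y)
        = ((gaussianReal 0 1).map (√(D * ε) * ·)).map (q + ·) := by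
          rw [Measure.map_map (by fun_prop) (by fun_prop)]; rfl
      _ = gaussianReal q (D * ε).toNNReal := by
          rw [gaussianReal_map_const_mul, gaussianReal_map_const_add]
          congr 1
          · simp
          · ext; simp [sq_sqrt hDε.le, hDε.le]
  have hpow : (2 * π * D * ε) ^ (-(1 : ℝ) / 2) = (√(2 * π * (D * ε)))⁻¹ := by
    rw [sqrt_eq_rpow, ← rpow_neg (by positivity)]; ring_nf
  rw [bayesUpdate, ← integral_map (φ := fun y ↦ q + √(D * ε) * y)
    (f := fun u ↦ exp (-(ε * V u)) * p u) (by fun_prop) (by fun_prop), hmap,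
    integral_gaussianReal_eq_integral_smul (Real.toNNReal_pos.mpr hDε).ne', hpow,
    ← integral_const_mul]
  congr 1 with u
  rw [gaussianPDFReal, Real.coe_toNNReal _ hDε.le, smul_eq_mul, sub_sq_comm]
  ring_nf

/-- The infinitesimal Bayesian update with Gaussian transition density
`(2πDε)^{-1/2} exp(-(q-u)²/(2Dε))` and exponential likelihood `exp(-εV(u))` generates
the imaginary-time Schrödinger equation: for continuous `V` and `p` twice continuously
differentiable with compact support,
`lim_{ε→0⁺} ε⁻¹ [(2πDε)^{-1/2} ∫ exp(-(q-u)²/(2Dε)) exp(-εV(u)) p(u) du - p(q)]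
  = (D/2) p''(q) - V(q) p(q)`. -/
theorem infinitesimal_bayesian_update_generator
    (D : ℝ) (hD : 0 < D) (V : ℝ → ℝ) (hV : Continuous V)
    (p : ℝ → ℝ) (hp : ContDiff ℝ 2 p) (hsupp : HasCompactSupport p) (q : ℝ) :
    Tendsto
      (fun ε : ℝ => (1 / ε) *
        ((2 * π * D * ε) ^ (-(1 : ℝ) / 2) *
            (∫ u : ℝ, Real.exp (-(q - u) ^ 2 / (2 * D * ε)) *
              Real.exp (-(ε * V u)) * p u) - p q))
      (𝓝[>] 0)
      (𝓝 (D / 2 * deriv (deriv p) q - V q * p q)) := by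
  have hvar : Var[id; gaussianReal 0 1] = 1 := by simp [variance_id_gaussianReal]
  refine (tendsto_bayesUpdate_sub_div (memLp_id_gaussianReal 2) integral_id_gaussianReal hvar
    hD.le hV hp hsupp q).congr' ?_
  filter_upwards [self_mem_nhdsWithin] with ε hε
  rw [bayesUpdate_gaussianReal hD hε hV.measurable hp.continuous.measurable, one_div_mul_eq_div]
end

section
/- Let 𝔸 be a complete normed unital algebra over ℝ and let A, B ∈ 𝔸 be such that the commutator C = A·B − B·A commutes with both A and B. Then exp(A)·exp(B) = exp(A + B + (1/2)·C); equivalently exp(A + B) = exp(A)·exp(B)·exp(−(1/2)·C). -/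
/-! Write C = A B - B A. Since C commutes with A, conjugation by exp(tA) shifts B to B + tC, so
F(t) = exp(tA) exp(tB) solves F' = (A + B + tC) F. Since C commutes with A + B,
K(t) = exp(-t(A + B)) exp(-(t²/2) C) solves K' = -K (A + B + tC). Hence K F is constant, equal to
K(0) F(0) = 1, and at t = 1 this says exp(A) exp(B) is the inverse of exp(-(A + B + C/2)). -/

open NormedSpace

theorem exp_mul_exp_neg {𝔸 : Type*} [NormedRing 𝔸] [NormedAlgebra ℚ 𝔸] [CompleteSpace 𝔸]
    (x : 𝔸) : exp x * exp (-x) = 1 := by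
  rw [← exp_add_of_commute (Commute.refl x).neg_right, add_neg_cancel, exp_zero]

section
variable {𝕜 𝔸 : Type*} [RCLike 𝕜] [NormedRing 𝔸] [NormedAlgebra 𝕜 𝔸]

theorem is_const_mul_of_hasDerivAt {k f m : 𝕜 → 𝔸}
    (hk : ∀ t, HasDerivAt k (-(k t * m t)) t) (hf : ∀ t, HasDerivAt f (m t * f t) t)
    (s t : 𝕜) : k s * f s = k t * f t := by
  have hkf (t : 𝕜) : HasDerivAt (k * f) 0 t :=
    ((hk t).mul (hf t)).congr_deriv (by noncomm_ring)
  exact is_const_of_deriv_eq_zero (fun t ↦ (hkf t).differentiableAt) (fun t ↦ (hkf t).deriv) s t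

variable [CompleteSpace 𝔸]

theorem exp_smul_mul_of_commute_commutator {x y : 𝔸} (h : Commute (x * y - y * x) x) (s : 𝕜) :
    exp (s • x) * y = (y + s • (x * y - y * x)) * exp (s • x) := by
  set c := x * y - y * x with hc
  have hf (t : 𝕜) : HasDerivAt (fun t : 𝕜 ↦ (y + t • c) * exp (t • x))
      (x * ((y + t • c) * exp (t • x))) t := by
    have hyc : HasDerivAt (fun t : 𝕜 ↦ y + t • c) c t := by
      simpa using ((hasDerivAt_id t).smul_const c).const_add y
    have hcoef : c + (y + t • c) * x = x * (y + t • c) := by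
      rw [add_mul, mul_add, smul_mul_assoc, mul_smul_comm, h.eq, hc]
      abel
    refine (hyc.mul (hasDerivAt_exp_smul_const' x t)).congr_deriv ?_
    rw [← mul_assoc, ← mul_assoc, ← add_mul, hcoef]
  have hk (t : 𝕜) : HasDerivAt (fun t : 𝕜 ↦ exp (t • -x)) (-(exp (t • -x) * x)) t :=
    (hasDerivAt_exp_smul_const (-x) t).congr_deriv (mul_neg _ _)
  have hconst := is_const_mul_of_hasDerivAt hk hf s 0
  simp only [zero_smul, add_zero, exp_zero, one_mul, mul_one] at hconst
  let : NormedAlgebra ℚ 𝔸 := NormedAlgebra.restrictScalars ℚ 𝕜 𝔸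
  calc exp (s • x) * y = exp (s • x) * (exp (s • -x) * ((y + s • c) * exp (s • x))) := by
        rw [hconst]
    _ = (y + s • c) * exp (s • x) := by rw [← mul_assoc, smul_neg, exp_mul_exp_neg, one_mul]

theorem hasDerivAt_exp_smul_mul_exp_smul {a b : 𝔸} (h : Commute (a * b - b * a) a) (t : 𝕜) :
    HasDerivAt (fun t : 𝕜 ↦ exp (t • a) * exp (t • b))
      ((a + b + t • (a * b - b * a)) * (exp (t • a) * exp (t • b))) t := by
  refine ((hasDerivAt_exp_smul_const' a t).mul (hasDerivAt_exp_smul_const' b t)).congr_deriv ?_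
  rw [← mul_assoc (exp (t • a)), exp_smul_mul_of_commute_commutator h, add_assoc, add_mul a,
    mul_assoc, mul_assoc]

theorem hasDerivAt_exp_smul_mul_exp_sq_smul {a c : 𝔸} (h : Commute a c) (t : 𝕜) :
    HasDerivAt (fun t : 𝕜 ↦ exp (t • a) * exp ((t ^ 2 / 2) • c))
      (exp (t • a) * exp ((t ^ 2 / 2) • c) * (a + t • c)) t := by
  have hsq : HasDerivAt (fun t : 𝕜 ↦ t ^ 2 / 2) t t := by
    simpa using (hasDerivAt_pow 2 t).div_const 2
  have hc : HasDerivAt (fun t : 𝕜 ↦ exp ((t ^ 2 / 2) • c))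
      (t • (exp ((t ^ 2 / 2) • c) * c)) t :=
    HasDerivAt.scomp (g₁ := fun u : 𝕜 ↦ exp (u • c)) t (hasDerivAt_exp_smul_const c _) hsq
  have hac : a * exp ((t ^ 2 / 2) • c) = exp ((t ^ 2 / 2) • c) * a :=
    (h.smul_right _).exp_right.eq
  refine ((hasDerivAt_exp_smul_const a t).mul hc).congr_deriv ?_
  rw [mul_assoc (exp (t • a)) a, hac, mul_add, mul_smul_comm, mul_smul_comm, mul_assoc, mul_assoc]

end

/-- Baker–Campbell–Hausdorff formula in Weyl form: in a real Banach
algebra, if the commutator `C = A B - B A` commutes with both `A` and `B`, then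
`exp(A) exp(B) = exp(A + B + (1/2) C)`. -/
theorem exp_mul_exp_of_commutator_central
    {𝔸 : Type*} [NormedRing 𝔸] [NormedAlgebra ℝ 𝔸] [CompleteSpace 𝔸]
    (A B : 𝔸) (h1 : Commute (A * B - B * A) A) (h2 : Commute (A * B - B * A) B) :
    exp A * exp B = exp (A + B + (1 / 2 : ℝ) • (A * B - B * A)) := by
  set C := A * B - B * A
  have hABC : Commute (-(A + B)) (-C) := (h1.add_right h2).symm.neg_left.neg_right
  have hk (t : ℝ) : HasDerivAt (fun t : ℝ ↦ exp (t • -(A + B)) * exp ((t ^ 2 / 2) • -C))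
      (-(exp (t • -(A + B)) * exp ((t ^ 2 / 2) • -C) * (A + B + t • C))) t :=
    (hasDerivAt_exp_smul_mul_exp_sq_smul hABC t).congr_deriv
      (by simp only [smul_neg, neg_add, mul_neg, mul_add])
  have hconst := is_const_mul_of_hasDerivAt hk (hasDerivAt_exp_smul_mul_exp_smul h1) 1 0
  simp only [one_smul, zero_smul, one_pow, exp_zero, mul_one, ne_eq, OfNat.ofNat_ne_zero,
    not_false_eq_true, zero_pow, zero_div] at hconst
  let : NormedAlgebra ℚ 𝔸 := NormedAlgebra.restrictScalars ℚ ℝ 𝔸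
  rw [← exp_add_of_commute (hABC.smul_right _), smul_neg, ← neg_add] at hconst
  exact (left_inv_eq_right_inv (exp_mul_exp_neg _) hconst).symm
end
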